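/- Let r : ℝ^m → ℝ be continuously differentiable on a convex set A ⊆ ℝ^m, and suppose two points a, a* ∈ A satisfy a system 2c·a_j = f_j(a) and 2c·a*_j = f_j(a*) for all j, where each f_j : A → ℝ is continuously differentiable with ‖∇f_j(x)‖ < 2c/m for all x ∈ A and all j. Then a = a*. -/

import Mathlib

open Finset

theorem stmt_13 {m : ℕ} (hm : 1 ≤ m) (c : ℝ) (hc : 0 < c)
    (A : Set (EuclideanSpace ℝ (Fin m))) (hA : Convex ℝ A)
    (f : Fin m → EuclideanSpace ℝ (Fin m) → ℝ)
    (hdiff : ∀ j, DifferentiableOn ℝ (f j) A)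
    (hgrad : ∀ j, ∀ x ∈ A, ‖fderivWithin ℝ (f j) A x‖ < 2 * c / m)
    (a astar : EuclideanSpace ℝ (Fin m)) (ha : a ∈ A) (hastar : astar ∈ A)
    (hfa : ∀ j, 2 * c * a j = f j a) (hfastar : ∀ j, 2 * c * astar j = f j astar) :
    a = astar := by
  by_contra hne
  have hmpos : (0 : ℝ) < m := by positivity
  -- pick coordinate with max gap
  obtain ⟨j, -, hj⟩ := Finset.exists_max_image (Finset.univ : Finset (Fin m))
    (fun i => |a i - astar i|) (by
      simpa [Finset.univ_nonempty_iff] using Fin.pos_iff_nonempty.mp (by omega))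
  have hjpos : 0 < |a j - astar j| := by
    rcases lt_or_ge 0 (|a j - astar j|) with h | h
    · exact h
    · exfalso
      apply hne
      ext i
      have := (hj i (Finset.mem_univ i)).trans h
      have : |a i - astar i| = 0 := le_antisymm this (abs_nonneg _)
      have := abs_eq_zero.mp this
      linarith
  -- MVT
  obtain ⟨z, hz, heq⟩ := domain_mvt (f' := fun x => fderivWithin ℝ (f j) A x)
    (fun x hx => ((hdiff j) x hx).hasFDerivWithinAt) hA ha hastar
  have hzA : z ∈ A := hA.segment_subset ha hastar hz
  -- norm bound
  have hnorm : ‖astar - a‖ ≤ m * |a j - astar j| := by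
    have h1 : ‖astar - a‖ = Real.sqrt (∑ i, (astar i - a i) ^ 2) := by
      rw [EuclideanSpace.norm_eq]
      congr 1
      refine Finset.sum_congr rfl fun i _ => ?_
      have : (astar - a) i = astar i - a i := rfl
      rw [this, Real.norm_eq_abs, sq_abs]
    rw [h1]
    have h2 : ∑ i, (astar i - a i) ^ 2 ≤ (m * |a j - astar j|) ^ 2 := by
      calc ∑ i, (astar i - a i) ^ 2 ≤ ∑ _i : Fin m, (a j - astar j) ^ 2 := by
            refine Finset.sum_le_sum fun i _ => ?_
            have := hj i (Finset.mem_univ i)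
            have h3 : |astar i - a i| ≤ |a j - astar j| := by
              rwa [abs_sub_comm]
            calc (astar i - a i) ^ 2 = |astar i - a i| ^ 2 := (sq_abs _).symm
              _ ≤ |a j - astar j| ^ 2 := by
                  exact pow_le_pow_left₀ (abs_nonneg _) h3 2
              _ = (a j - astar j) ^ 2 := sq_abs _
        _ = m * (a j - astar j) ^ 2 := by simp [Finset.sum_const, mul_comm]
        _ ≤ (m * |a j - astar j|) ^ 2 := by
            rw [mul_pow, sq_abs]
            have h4 : (1:ℝ) ≤ m := by exact_mod_cast hm
            have h5 : (m:ℝ) ≤ (m:ℝ)^2 := by nlinarith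
            calc (m:ℝ) * (a j - astar j)^2 ≤ (m:ℝ)^2 * (a j - astar j)^2 :=
                  mul_le_mul_of_nonneg_right h5 (sq_nonneg _)
              _ = (m:ℝ)^2 * (a j - astar j)^2 := rfl
    calc Real.sqrt (∑ i, (astar i - a i) ^ 2) ≤ Real.sqrt ((m * |a j - astar j|) ^ 2) :=
          Real.sqrt_le_sqrt h2
      _ = m * |a j - astar j| := Real.sqrt_sq (by positivity)
  have hnpos : 0 < ‖astar - a‖ := by
    rw [norm_pos_iff]
    exact sub_ne_zero.mpr (fun h => hne h.symm)
  -- key inequality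
  have hlhs : 2 * c * |a j - astar j| = |f j astar - f j a| := by
    rw [← hfa j, ← hfastar j, ← mul_sub, abs_mul, abs_sub_comm]
    rw [abs_of_pos (by linarith : (0:ℝ) < 2 * c)]
  have hle : |f j astar - f j a| ≤ ‖fderivWithin ℝ (f j) A z‖ * ‖astar - a‖ := by
    rw [heq]
    exact (fderivWithin ℝ (f j) A z).le_opNorm _
  have hlt : ‖fderivWithin ℝ (f j) A z‖ * ‖astar - a‖ < (2 * c / m) * ‖astar - a‖ :=
    mul_lt_mul_of_pos_right (hgrad j z hzA) hnpos
  have hfin : (2 * c / m) * ‖astar - a‖ ≤ (2 * c / m) * (m * |a j - astar j|) :=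
    mul_le_mul_of_nonneg_left hnorm (by positivity)
  have : 2 * c * |a j - astar j| < 2 * c * |a j - astar j| := by
    calc 2 * c * |a j - astar j| = |f j astar - f j a| := hlhs
      _ ≤ ‖fderivWithin ℝ (f j) A z‖ * ‖astar - a‖ := hle
      _ < (2 * c / m) * ‖astar - a‖ := hlt
      _ ≤ (2 * c / m) * (m * |a j - astar j|) := hfin
      _ = 2 * c * |a j - astar j| := by field_simp
  exact absurd this (lt_irrefl _)
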